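/- arXiv:math/0409171 — 7 statements merged into one kernel-verified Lean document; each statement's English description precedes it below -/
import Mathlib

section
/- Let A ⊆ {0,1}^{n_A} be a code with (symmetric) norm N_A with respect to its last coordinate, and B ⊆ {0,1}^{n_B} a code with norm N_B with respect to its first coordinate. Then the amalgamated direct sum A ⊕̇ B = {(a,0,b) : (a,0) ∈ A, (0,b) ∈ B} ∪ {(a,1,b) : (a,1) ∈ A, (1,b) ∈ B} ⊆ {0,1}^{n_A+n_B-1} has norm N_A + N_B - 1 with respect to coordinate n_A. -/
open Finset

abbrev Vec (n : ℕ) := Fin n → Bool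

noncomputable def dS {n : ℕ} (x : Vec n) (Y : Set (Vec n)) : ℕ∞ :=
  ⨅ y ∈ Y, (hammingDist x y : ℕ∞)

noncomputable def dA {n : ℕ} (x : Vec n) (Y : Set (Vec n)) : ℕ∞ :=
  ⨅ y ∈ {y ∈ Y | ∀ i, x i ≤ y i}, (hammingDist x y : ℕ∞)

def sec {n : ℕ} (C : Set (Vec n)) (i : Fin n) (b : Bool) : Set (Vec n) :=
  {c ∈ C | c i = b}

def NormAt {n : ℕ} (C : Set (Vec n)) (i : Fin n) (N : ℕ) : Prop :=
  ∀ x : Vec n, dS x (sec C i false) + dS x (sec C i true) ≤ (N : ℕ∞)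

def AsymNormAt {n : ℕ} (C : Set (Vec n)) (i : Fin n) (N : ℕ) : Prop :=
  ∀ x : Vec n,
    (x i = false → dA x (sec C i false) + dA x (sec C i true) ≤ (N : ℕ∞)) ∧
    (x i = true → 2 * dA x (sec C i true) + 1 ≤ (N : ℕ∞))

def ads {nA nB : ℕ} (A : Set (Vec (nA+1))) (B : Set (Vec (nB+1))) :
    Set (Vec (nA+1+nB)) :=
  {z | ∃ (a : Fin nA → Bool) (t : Bool) (b : Fin nB → Bool),
    Fin.snoc a t ∈ A ∧ Fin.cons t b ∈ B ∧ z = Fin.append (Fin.snoc a t) b}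

def flipCoord {n : ℕ} (x : Vec n) (i : Fin n) : Vec n := Function.update x i (!x i)

def PatchedAt {n : ℕ} (S T : Set (Vec n)) (i : Fin n) (N : ℕ) : Prop :=
  ∀ x : Vec n, (dS x (sec S i false) + dS x (sec S i true) ≤ (N : ℕ∞))
    ∨ (x ∈ T ∧ flipCoord x i ∈ T)

def AsymPatchedAt {n : ℕ} (S T : Set (Vec n)) (i : Fin n) (N : ℕ) : Prop :=
  ∀ x : Vec n,
    (x i = false → (dA x (sec S i false) + dA x (sec S i true) ≤ (N : ℕ∞))
       ∨ (x ∈ T ∧ flipCoord x i ∈ T)) ∧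
    (x i = true → (2 * dA x (sec S i true) + 1 ≤ (N : ℕ∞)) ∨ x ∈ T)

/-!
Write `x = (u, v)` with `u` the first `nA + 1` coordinates. For each bit `b`, codewords
`a ∈ A_b` and `c ∈ B_b` glue (along their common value `b`) to a codeword of `(A ⊕̇ B)_b`
whose distance to `x` is `d(u, a) + d((u_last, v), c)`, minus one if `u_last ≠ b`, since
the shared coordinate is counted in both summands. This correction occurs for exactly one
of `b = 0, 1`, so adding the two bits gives `d(x, C_0) + d(x, C_1) + 1 ≤ N_A + N_B`.
-/

theorem Fin.hammingDist_append {α : Type*} [DecidableEq α] {m n : ℕ}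
    (x₁ y₁ : Fin m → α) (x₂ y₂ : Fin n → α) :
    hammingDist (Fin.append x₁ x₂) (Fin.append y₁ y₂) =
      hammingDist x₁ y₁ + hammingDist x₂ y₂ := by
  simp only [hammingDist, card_filter, Fin.sum_univ_add, Fin.append_left, Fin.append_right]

theorem Fin.hammingDist_cons {α : Type*} [DecidableEq α] {n : ℕ}
    (a b : α) (x y : Fin n → α) :
    hammingDist (Fin.cons a x : Fin (n + 1) → α) (Fin.cons b y) =
      hammingDist x y + if a = b then 0 else 1 := by
  simp only [hammingDist, card_filter, Fin.sum_univ_succ, Fin.cons_zero, Fin.cons_succ, ne_eq,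
    ite_not]
  ring

theorem dS_le_hammingDist {n : ℕ} {x y : Vec n} {Y : Set (Vec n)} (hy : y ∈ Y) :
    dS x Y ≤ hammingDist x y :=
  iInf₂_le y hy

theorem append_tail_mem_sec_ads {nA nB : ℕ} {A : Set (Vec (nA + 1))} {B : Set (Vec (nB + 1))}
    {b : Bool} {a : Vec (nA + 1)} {c : Vec (nB + 1)}
    (ha : a ∈ sec A (Fin.last nA) b) (hc : c ∈ sec B 0 b) :
    Fin.append a (Fin.tail c) ∈ sec (ads A B) (Fin.castAdd nB (Fin.last nA)) b := by
  obtain ⟨haA, rfl⟩ := ha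
  obtain ⟨hcB, hc0⟩ := hc
  refine ⟨⟨Fin.init a, a (Fin.last nA), Fin.tail c, ?_, ?_, ?_⟩, ?_⟩
  · rwa [Fin.snoc_init_self]
  · rwa [← hc0, Fin.cons_self_tail]
  · rw [Fin.snoc_init_self]
  · exact Fin.append_left _ _ _

theorem dS_sec_ads_add_le {nA nB : ℕ} (A : Set (Vec (nA + 1))) (B : Set (Vec (nB + 1)))
    (u : Vec (nA + 1)) (v : Vec nB) (b : Bool) :
    dS (Fin.append u v) (sec (ads A B) (Fin.castAdd nB (Fin.last nA)) b)
        + (if u (Fin.last nA) = b then 0 else 1) ≤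
      dS u (sec A (Fin.last nA) b) + dS (Fin.cons (u (Fin.last nA)) v) (sec B 0 b) := by
  refine ENat.le_iInf₂_add_iInf₂ fun a ha c hc => ?_
  have hc_eq : c = Fin.cons b (Fin.tail c) := by rw [← hc.2, Fin.cons_self_tail]
  calc _ ≤ (hammingDist (Fin.append u v) (Fin.append a (Fin.tail c)) : ℕ∞)
          + (if u (Fin.last nA) = b then 0 else 1) :=
        add_le_add_left (dS_le_hammingDist (append_tail_mem_sec_ads ha hc)) _
    _ = hammingDist u a + hammingDist (Fin.cons (u (Fin.last nA)) v : Vec (nB + 1)) c := by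
        rw [hc_eq, Fin.hammingDist_append, Fin.hammingDist_cons, Fin.tail_cons]
        split_ifs <;> push_cast <;> ring

theorem ads_norm (nA nB NA NB : ℕ)
    (A : Set (Vec (nA + 1))) (B : Set (Vec (nB + 1)))
    (hA : NormAt A (Fin.last nA) NA) (hB : NormAt B 0 NB) :
    NormAt (ads A B) (Fin.castAdd nB (Fin.last nA)) (NA + NB - 1) := by
  intro x
  rw [← Fin.append_castAdd_natAdd (f := x)]
  set u : Vec (nA + 1) := fun i => x (Fin.castAdd nB i)
  set v : Vec nB := fun i => x (Fin.natAdd (nA + 1) i)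
  have hcorrection : (if u (Fin.last nA) = false then 0 else 1 : ℕ∞)
      + (if u (Fin.last nA) = true then 0 else 1) = 1 := by
    cases u (Fin.last nA) <;> simp
  have hsum := add_le_add (dS_sec_ads_add_le A B u v false) (dS_sec_ads_add_le A B u v true)
  rw [add_add_add_comm, hcorrection, add_add_add_comm] at hsum
  push_cast
  exact ENat.le_sub_of_add_le_right ENat.one_ne_top
    (hsum.trans (add_le_add (hA u) (hB (Fin.cons (u (Fin.last nA)) v))))
end

section
/- Suppose (S,T) is a norm N-patched symmetric code of length n with coordinate n acceptable, K₁ ⊆ {0,1}^{n'} has norm N' with respect to its first coordinate, and K₂ ⊆ {0,1}^{n'} has norm N+N'-1 with respect to its first coordinate. Then the amalgamated semi-direct sum (S ⊕̇ K₁) ∪ (T ⊕̇ K₂) ⊆ {0,1}^{n+n'-1} has norm N+N'-1 with respect to coordinate n. -/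
open Finset

lemma hd_sum {m : ℕ} (x y : Vec m) :
    hammingDist x y = ∑ i, if x i = y i then 0 else 1 := by
  rw [hammingDist, Finset.card_filter]
  exact Finset.sum_congr rfl fun i _ => by by_cases h : x i = y i <;> simp [h]

lemma hd_append {m k : ℕ} (a a' : Vec m) (b b' : Vec k) :
    hammingDist (Fin.append a b) (Fin.append a' b') = hammingDist a a' + hammingDist b b' := by
  simp only [hd_sum, Fin.sum_univ_add, Fin.append_left, Fin.append_right]

lemma hd_snoc {m : ℕ} (a a' : Vec m) (s s' : Bool) :
    hammingDist (Fin.snoc a s : Vec (m+1)) (Fin.snoc a' s') = hammingDist a a' + (if s = s' then 0 else 1) := by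
  simp only [hd_sum, Fin.sum_univ_castSucc, Fin.snoc_castSucc, Fin.snoc_last]

lemma hd_cons {m : ℕ} (s s' : Bool) (b b' : Vec m) :
    hammingDist (Fin.cons s b : Vec (m+1)) (Fin.cons s' b') = (if s = s' then 0 else 1) + hammingDist b b' := by
  simp only [hd_sum, Fin.sum_univ_succ, Fin.cons_zero, Fin.cons_succ]

lemma dS_le {m : ℕ} {x y : Vec m} {Y : Set (Vec m)} (h : y ∈ Y) :
    dS x Y ≤ (hammingDist x y : ℕ∞) := by
  rw [dS]; exact iInf₂_le y h

lemma dS_att {m : ℕ} (x : Vec m) (Y : Set (Vec m)) (h : dS x Y ≠ ⊤) :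
    ∃ y ∈ Y, (hammingDist x y : ℕ∞) = dS x Y := by
  have hlt : dS x Y < dS x Y + 1 := (ENat.lt_add_one_iff h).mpr le_rfl
  rw [dS, iInf_lt_iff] at hlt
  obtain ⟨y, hy⟩ := hlt
  rw [iInf_lt_iff] at hy
  obtain ⟨hyY, hylt⟩ := hy
  refine ⟨y, hyY, le_antisymm ?_ (dS_le hyY)⟩
  exact (ENat.lt_add_one_iff h).mp hylt

lemma enat_sub {a : ℕ∞} {m : ℕ} (h : a + 1 ≤ (m : ℕ∞)) : a ≤ ((m - 1 : ℕ) : ℕ∞) := by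
  have ha : a ≠ ⊤ := by
    intro ht; rw [ht] at h; simp at h
  lift a to ℕ using ha
  have hk : (a : ℕ) + 1 ≤ m := by exact_mod_cast h
  have : a ≤ m - 1 := by omega
  exact_mod_cast this

lemma hne_top {d d' : ℕ∞} {M : ℕ} (h : d + d' ≤ (M : ℕ∞)) : d ≠ ⊤ ∧ d' ≠ ⊤ := by
  constructor <;> intro ht <;> rw [ht] at h <;> simp at h

theorem asds_norm (n n' N N' : ℕ)
    (S T : Set (Vec (n + 1))) (K1 K2 : Set (Vec (n' + 1)))
    (hST : PatchedAt S T (Fin.last n) N)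
    (hK1 : NormAt K1 0 N') (hK2 : NormAt K2 0 (N + N' - 1)) :
    NormAt (ads S K1 ∪ ads T K2) (Fin.castAdd n' (Fin.last n)) (N + N' - 1) := by
  intro x
  classical
  set C : Set (Vec (n+1+n')) := ads S K1 ∪ ads T K2 with hC
  set i : Fin (n+1+n') := Fin.castAdd n' (Fin.last n) with hi
  set u : Vec (n+1) := fun j => x (Fin.castAdd n' j) with hu
  set v : Vec n' := fun j => x (Fin.natAdd (n+1) j) with hv
  have hx : x = Fin.append u v := by
    funext j
    refine Fin.addCases (fun j1 => ?_) (fun j2 => ?_) j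
    · rw [Fin.append_left]
    · rw [Fin.append_right]
  set a : Vec n := Fin.init u with ha
  have ht0 : u = Fin.snoc a (u (Fin.last n)) := (Fin.snoc_init_self u).symm
  set t0 : Bool := u (Fin.last n) with ht0d
  set w : Vec (n'+1) := Fin.cons t0 v with hw
  -- key bound
  have key : ∀ (A : Set (Vec (n+1))) (K : Set (Vec (n'+1))) (b : Bool)
      (a1 : Vec n) (c2 : Vec (n'+1)), ads A K ⊆ C →
      (Fin.snoc a1 b : Vec (n+1)) ∈ A → c2 ∈ sec K 0 b →
      dS x (sec C i b) ≤ ((hammingDist a a1 + hammingDist w c2 : ℕ) : ℕ∞) := by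
    intro A K b a1 c2 hsub h1 h2
    have h2b : c2 0 = b := h2.2
    have hc2 : c2 = Fin.cons b (Fin.tail c2) := by
      conv_lhs => rw [← Fin.cons_self_tail c2]
      rw [h2b]
    set z : Vec (n+1+n') := Fin.append (Fin.snoc a1 b) (Fin.tail c2) with hz
    have hzmem : z ∈ sec C i b := by
      refine ⟨hsub ⟨a1, b, Fin.tail c2, h1, ?_, rfl⟩, ?_⟩
      · rw [← hc2]; exact h2.1
      · show z i = b
        rw [hz, hi, Fin.append_left, Fin.snoc_last]
    have hdz : hammingDist x z = hammingDist a a1 + hammingDist w c2 := by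
      rw [hx, hz, hd_append, ht0, hd_snoc, hw]
      conv_rhs => rw [hc2]
      rw [hd_cons]
      ring
    calc dS x (sec C i b) ≤ (hammingDist x z : ℕ∞) := dS_le hzmem
      _ = _ := by rw [hdz]
  have hif : (if t0 = false then (0:ℕ) else 1) + (if t0 = true then 0 else 1) = 1 := by
    rcases Bool.eq_false_or_eq_true t0 with h | h <;> rw [h] <;> norm_num
  rcases hST u with hS | ⟨hT1, hT2⟩
  · -- norm case
    obtain ⟨c1f, hc1fS, hc1f⟩ := dS_att u _ (hne_top hS).1
    obtain ⟨c1t, hc1tS, hc1t⟩ := dS_att u _ (hne_top hS).2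
    have hK1w := hK1 w
    obtain ⟨c2f, hc2f, hd2f⟩ := dS_att w _ (hne_top hK1w).1
    obtain ⟨c2t, hc2t, hd2t⟩ := dS_att w _ (hne_top hK1w).2
    have hcf : c1f = (Fin.snoc (Fin.init c1f) false : Vec (n+1)) := by
      conv_lhs => rw [← Fin.snoc_init_self c1f]
      rw [hc1fS.2]
    have hct : c1t = (Fin.snoc (Fin.init c1t) true : Vec (n+1)) := by
      conv_lhs => rw [← Fin.snoc_init_self c1t]
      rw [hc1tS.2]
    have k0 := key S K1 false (Fin.init c1f) c2f Set.subset_union_left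
      (hcf ▸ hc1fS.1) hc2f
    have k1 := key S K1 true (Fin.init c1t) c2t Set.subset_union_left
      (hct ▸ hc1tS.1) hc2t
    have e0 : hammingDist u c1f = hammingDist a (Fin.init c1f) + (if t0 = false then 0 else 1) := by
      conv_lhs => rw [ht0, hcf]
      rw [hd_snoc]
    have e1 : hammingDist u c1t = hammingDist a (Fin.init c1t) + (if t0 = true then 0 else 1) := by
      conv_lhs => rw [ht0, hct]
      rw [hd_snoc]
    have hnat : (hammingDist a (Fin.init c1f) + hammingDist w c2f)
        + (hammingDist a (Fin.init c1t) + hammingDist w c2t) + 1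
        = (hammingDist u c1f + hammingDist u c1t) + (hammingDist w c2f + hammingDist w c2t) := by
      rw [e0, e1]; omega
    have hsum : dS x (sec C i false) + dS x (sec C i true) + 1
        ≤ ((N + N' : ℕ) : ℕ∞) := by
      calc dS x (sec C i false) + dS x (sec C i true) + 1
          ≤ ((hammingDist a (Fin.init c1f) + hammingDist w c2f : ℕ) : ℕ∞)
            + ((hammingDist a (Fin.init c1t) + hammingDist w c2t : ℕ) : ℕ∞) + 1 :=
            add_le_add (add_le_add k0 k1) le_rfl
        _ = (((hammingDist u c1f + hammingDist u c1t) + (hammingDist w c2f + hammingDist w c2t) : ℕ) : ℕ∞) := by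
            rw [← hnat]; push_cast; ring
        _ ≤ ((N + N' : ℕ) : ℕ∞) := by
            push_cast
            rw [hc1f, hc1t, hd2f, hd2t]
            exact add_le_add hS hK1w
    exact enat_sub hsum
  · -- patched case
    have hK2w := hK2 w
    obtain ⟨c2f, hc2f, hd2f⟩ := dS_att w _ (hne_top hK2w).1
    obtain ⟨c2t, hc2t, hd2t⟩ := dS_att w _ (hne_top hK2w).2
    have hTall : ∀ b : Bool, (Fin.snoc a b : Vec (n+1)) ∈ T := by
      intro b
      by_cases hb : t0 = b
      · rw [← hb, ← ht0]; exact hT1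
      · have hb' : b = !t0 := by
          rw [Bool.eq_not_iff]; exact fun hbt => hb hbt.symm
        have hflip : flipCoord u (Fin.last n) = (Fin.snoc a (!t0) : Vec (n+1)) := by
          rw [flipCoord, ht0]
          simp [Fin.update_snoc_last]
        rw [hb', ← hflip]
        exact hT2
    have k0 := key T K2 false a c2f Set.subset_union_right (hTall false) hc2f
    have k1 := key T K2 true a c2t Set.subset_union_right (hTall true) hc2t
    rw [hammingDist_self] at k0 k1
    calc dS x (sec C i false) + dS x (sec C i true)
        ≤ ((0 + hammingDist w c2f : ℕ) : ℕ∞) + ((0 + hammingDist w c2t : ℕ) : ℕ∞) :=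
          add_le_add k0 k1
      _ = dS w (sec K2 0 false) + dS w (sec K2 0 true) := by
          rw [← hd2f, ← hd2t]; push_cast; ring
      _ ≤ _ := hK2w
end

section
/- Suppose (S,T) is a norm N-patched asymmetric code of length n with coordinate n acceptable, K₁ ⊆ {0,1}^{n'} has asymmetric norm N' with respect to its first coordinate, and K₂ ⊆ {0,1}^{n'} has asymmetric norm N+N'-1 with respect to its first coordinate. Then (S ⊕̇ K₁) ∪ (T ⊕̇ K₂) ⊆ {0,1}^{n+n'-1} has asymmetric norm N+N'-1 with respect to coordinate n. -/
open Finset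

/-
Write a word as `Fin.append u v` and let `t` be the last bit of `u`. Words `y ∈ A` and `w ∈ B`
that agree in the glued bit `s` combine to a word of `ads A B` whose upward distance from
`Fin.append u v` is `d(u, y) + d(Fin.cons t v, w)`, less one when `t ≠ s`, since the glued
coordinate is then counted on both sides. In the first alternative of the patching condition,
`S` and `K₁` pool their budgets `N` and `N'` and save that unit on the side `s ≠ t`; in the
second, `u` and its flip lie in `T`, so the `T`-part costs nothing beyond the shared bit and
`K₂` pays for the rest.
-/

section Hamming

variable {β : Type*} [DecidableEq β]

theorem hammingDist_append {m k : ℕ} (u u' : Fin m → β) (v v' : Fin k → β) :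
    hammingDist (Fin.append u v) (Fin.append u' v') = hammingDist u u' + hammingDist v v' := by
  simp only [hammingDist, Finset.card_filter, Fin.sum_univ_add, Fin.append_left, Fin.append_right]

theorem hammingDist_cons {k : ℕ} (a a' : β) (v v' : Fin k → β) :
    hammingDist (Fin.cons a v : Fin (k + 1) → β) (Fin.cons a' v') =
      (if a = a' then 0 else 1) + hammingDist v v' := by
  simp only [hammingDist, Finset.card_filter, Fin.sum_univ_succ, Fin.cons_zero, Fin.cons_succ,
    ite_not]

theorem hammingDist_update_le_one {n : ℕ} (x : Fin n → β) (i : Fin n) (b : β) :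
    hammingDist x (Function.update x i b) ≤ 1 := by
  refine Finset.card_le_one.mpr fun j hj k hk => ?_
  simp only [Finset.mem_filter, Finset.mem_univ, true_and] at hj hk
  have eq_of_ne : ∀ j, x j ≠ Function.update x i b j → j = i := fun j hj =>
    by_contra fun hji => hj (Function.update_of_ne hji b x).symm
  exact (eq_of_ne j hj).trans (eq_of_ne k hk).symm

end Hamming

theorem Fin.append_le_append {α : Type*} [Preorder α] {m k : ℕ} {u u' : Fin m → α}
    {v v' : Fin k → α} (hu : u ≤ u') (hv : v ≤ v') :
    Fin.append u v ≤ Fin.append u' v' := by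
  intro i
  induction i using Fin.addCases with
  | left i => simpa only [Fin.append_left] using hu i
  | right j => simpa only [Fin.append_right] using hv j

theorem ENat.le_natCast_sub_one_of_add_one_le {c : ℕ∞} {m : ℕ} (h : c + 1 ≤ m) :
    c ≤ ((m - 1 : ℕ) : ℕ∞) := by
  rw [ENat.natCast_sub, Nat.cast_one]
  exact ENat.le_sub_of_add_le_right ENat.one_ne_top h

section AsymmetricDistance

variable {m : ℕ} {x y : Vec m} {Y : Set (Vec m)}

theorem dA_le_hammingDist (hy : y ∈ Y) (hxy : x ≤ y) : dA x Y ≤ hammingDist x y :=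
  iInf₂_le y ⟨hy, hxy⟩

theorem dA_eq_zero_of_mem (hx : x ∈ Y) : dA x Y = 0 := by
  simpa using dA_le_hammingDist hx le_rfl

theorem dA_sec_true_le_one_of_flipCoord_mem {i : Fin m} (hx : x i = false)
    (h : flipCoord x i ∈ Y) : dA x (sec Y i true) ≤ 1 := by
  have hflip : flipCoord x i i = true := by simp [flipCoord, hx]
  have hle : x ≤ flipCoord x i := le_update_iff.mpr ⟨by simp [hx], fun _ _ => le_rfl⟩
  exact (dA_le_hammingDist (Y := sec Y i true) ⟨h, hflip⟩ hle).trans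
    (by exact_mod_cast hammingDist_update_le_one x i _)

end AsymmetricDistance

theorem dA_sec_add_le_of_ads_subset {n n' : ℕ} {A : Set (Vec (n + 1))} {B : Set (Vec (n' + 1))}
    {C : Set (Vec (n + 1 + n'))} (hC : ads A B ⊆ C) (u : Vec (n + 1)) (v : Vec n') (t s : Bool) :
    dA (Fin.append u v) (sec C (Fin.castAdd n' (Fin.last n)) s) + (if t = s then 0 else 1) ≤
      dA u (sec A (Fin.last n) s) + dA (Fin.cons t v) (sec B 0 s) := by
  refine ENat.le_iInf₂_add_iInf₂ fun y hy w hw => ?_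
  obtain ⟨⟨hyA, hys⟩, huy⟩ := hy
  obtain ⟨⟨hwB, hws⟩, hvw⟩ := hw
  induction y using Fin.snocCases with | snoc a s₁ => ?_
  induction w using Fin.consCases with | cons s₂ w => ?_
  rw [Fin.snoc_last] at hys
  rw [Fin.cons_zero] at hws
  subst s₁ s₂
  have hz : Fin.append (Fin.snoc a s) w ∈ sec C (Fin.castAdd n' (Fin.last n)) s :=
    ⟨hC ⟨a, s, w, hyA, hwB, rfl⟩, by rw [Fin.append_left, Fin.snoc_last]⟩
  have hvw' : v ≤ w := (Fin.cons_le_cons.mp hvw).2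
  calc _ ≤ (hammingDist (Fin.append u v) (Fin.append (Fin.snoc a s) w) : ℕ∞) +
          (if t = s then 0 else 1) := by
        gcongr
        exact dA_le_hammingDist hz (Fin.append_le_append huy hvw')
    _ = _ := by
        rw [hammingDist_append, hammingDist_cons]
        split_ifs <;> push_cast <;> ring

section Amalgamation

variable {n n' N N' : ℕ} {S T : Set (Vec (n + 1))} {K₁ K₂ : Set (Vec (n' + 1))}
  {u : Vec (n + 1)} (v : Vec n')

theorem dA_sec_false_add_dA_sec_true_ads_union_le (hu : u (Fin.last n) = false)
    (hST : dA u (sec S (Fin.last n) false) + dA u (sec S (Fin.last n) true) ≤ N ∨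
      u ∈ T ∧ flipCoord u (Fin.last n) ∈ T)
    (hK₁ : dA (Fin.cons false v) (sec K₁ 0 false) + dA (Fin.cons false v) (sec K₁ 0 true) ≤
      N')
    (hK₂ : dA (Fin.cons false v) (sec K₂ 0 false) + dA (Fin.cons false v) (sec K₂ 0 true) ≤
      ((N + N' - 1 : ℕ) : ℕ∞)) :
    dA (Fin.append u v) (sec (ads S K₁ ∪ ads T K₂) (Fin.castAdd n' (Fin.last n)) false) +
      dA (Fin.append u v) (sec (ads S K₁ ∪ ads T K₂) (Fin.castAdd n' (Fin.last n)) true) ≤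
        ((N + N' - 1 : ℕ) : ℕ∞) := by
  rcases hST with hS | ⟨huT, hflipT⟩
  · have key := dA_sec_add_le_of_ads_subset
      (Set.subset_union_left : ads S K₁ ⊆ ads S K₁ ∪ ads T K₂) u v false
    have h₀ := key false
    have h₁ := key true
    simp only [if_true, Bool.false_eq_true, if_false, add_zero] at h₀ h₁
    refine ENat.le_natCast_sub_one_of_add_one_le ?_
    calc _ ≤ _ := (add_assoc _ _ _).trans_le (add_le_add h₀ h₁)
      _ = _ := add_add_add_comm _ _ _ _
      _ ≤ N + N' := add_le_add hS hK₁
      _ = _ := by norm_cast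
  · have key := dA_sec_add_le_of_ads_subset
      (Set.subset_union_right : ads T K₂ ⊆ ads S K₁ ∪ ads T K₂) u v false
    have h₀ := key false
    have h₁ := key true
    simp only [if_true, Bool.false_eq_true, if_false, add_zero] at h₀ h₁
    rw [dA_eq_zero_of_mem (Y := sec T (Fin.last n) false) ⟨huT, hu⟩, zero_add] at h₀
    -- the flipped last bit costs one on each side of `h₁`, so it cancels
    have h₁' := h₁.trans (add_le_add_left (dA_sec_true_le_one_of_flipCoord_mem hu hflipT) _)
    rw [add_comm 1, ENat.add_le_add_iff_right ENat.one_ne_top] at h₁'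
    exact (add_le_add h₀ h₁').trans hK₂

theorem two_mul_dA_sec_true_ads_union_add_one_le (hu : u (Fin.last n) = true)
    (hST : 2 * dA u (sec S (Fin.last n) true) + 1 ≤ N ∨ u ∈ T)
    (hK₁ : 2 * dA (Fin.cons true v) (sec K₁ 0 true) + 1 ≤ N')
    (hK₂ : 2 * dA (Fin.cons true v) (sec K₂ 0 true) + 1 ≤ ((N + N' - 1 : ℕ) : ℕ∞)) :
    2 * dA (Fin.append u v) (sec (ads S K₁ ∪ ads T K₂) (Fin.castAdd n' (Fin.last n)) true) +
      1 ≤ ((N + N' - 1 : ℕ) : ℕ∞) := by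
  rcases hST with hS | huT
  · have h := dA_sec_add_le_of_ads_subset
      (Set.subset_union_left : ads S K₁ ⊆ ads S K₁ ∪ ads T K₂) u v true true
    simp only [if_true, add_zero] at h
    refine ENat.le_natCast_sub_one_of_add_one_le ?_
    set a := dA u (sec S (Fin.last n) true)
    set b := dA (Fin.cons true v) (sec K₁ 0 true)
    calc _ ≤ 2 * (a + b) + 1 + 1 := by gcongr
      _ = (2 * a + 1) + (2 * b + 1) := by ring
      _ ≤ N + N' := add_le_add hS hK₁
      _ = _ := by norm_cast
  · have h := dA_sec_add_le_of_ads_subset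
      (Set.subset_union_right : ads T K₂ ⊆ ads S K₁ ∪ ads T K₂) u v true true
    simp only [if_true, add_zero, dA_eq_zero_of_mem (Y := sec T (Fin.last n) true) ⟨huT, hu⟩,
      zero_add] at h
    exact le_trans (by gcongr) hK₂

end Amalgamation

theorem asds_asym_norm (n n' N N' : ℕ)
    (S T : Set (Vec (n + 1))) (K1 K2 : Set (Vec (n' + 1)))
    (hST : AsymPatchedAt S T (Fin.last n) N)
    (hK1 : AsymNormAt K1 0 N') (hK2 : AsymNormAt K2 0 (N + N' - 1)) :
    AsymNormAt (ads S K1 ∪ ads T K2) (Fin.castAdd n' (Fin.last n)) (N + N' - 1) := by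
  intro x
  obtain ⟨u, v, rfl⟩ : ∃ u v, x = Fin.append u v := ⟨_, _, Fin.append_castAdd_natAdd.symm⟩
  rw [Fin.append_left]
  exact ⟨fun hu => dA_sec_false_add_dA_sec_true_ads_union_le v hu ((hST u).1 hu)
      ((hK1 _).1 rfl) ((hK2 _).1 rfl),
    fun hu => two_mul_dA_sec_true_ads_union_add_one_le v hu ((hST u).2 hu)
      ((hK1 _).2 rfl) ((hK2 _).2 rfl)⟩
end

section
/- If (S,T) is a norm N-patched symmetric code of length n, then S ∪ T is a symmetric covering code of length n with covering radius at most ⌊N/2⌋. -/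
open Finset

lemma exists_of_dS_le {n : ℕ} (x : Vec n) (Y : Set (Vec n)) (k : ℕ)
    (h : dS x Y ≤ (k : ℕ∞)) : ∃ y ∈ Y, hammingDist x y ≤ k := by
  by_contra hc
  push_neg at hc
  have h1 : ((k + 1 : ℕ) : ℕ∞) ≤ dS x Y := by
    apply le_iInf₂
    intro y hy
    exact_mod_cast hc y hy
  have h2 := h1.trans h
  have : k + 1 ≤ k := by exact_mod_cast h2
  omega

theorem patched_union_covers (n N : ℕ) (S T : Set (Vec n)) (i : Fin n)
    (h : PatchedAt S T i N) :
    ∀ x : Vec n, ∃ c ∈ S ∪ T, hammingDist x c ≤ N / 2 := by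
  intro x
  rcases h x with hsum | ⟨hT, _⟩
  · have ha : dS x (sec S i false) ≤ ((N/2 : ℕ) : ℕ∞) ∨
        dS x (sec S i true) ≤ ((N/2 : ℕ) : ℕ∞) := by
      by_contra hc
      push_neg at hc
      obtain ⟨h1, h2⟩ := hc
      have e1 : ((N/2 + 1 : ℕ) : ℕ∞) ≤ dS x (sec S i false) := by
        exact_mod_cast Order.add_one_le_of_lt h1
      have e2 : ((N/2 + 1 : ℕ) : ℕ∞) ≤ dS x (sec S i true) := by
        exact_mod_cast Order.add_one_le_of_lt h2
      have e3 : ((N/2 + 1 + (N/2 + 1) : ℕ) : ℕ∞) ≤ (N : ℕ∞) := by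
        push_cast
        exact (add_le_add e1 e2).trans hsum
      have : N/2 + 1 + (N/2 + 1) ≤ N := by exact_mod_cast e3
      omega
    rcases ha with hc | hc <;>
      · obtain ⟨y, hy, hd⟩ := exists_of_dS_le x _ _ hc
        exact ⟨y, Or.inl hy.1, hd⟩
  · exact ⟨x, Or.inr hT, by simp⟩
end

section
/- For every positive constant x and positive integers N ≤ n, there exist sets S₀ ⊆ {v ∈ {0,1}^n : v_n = 0} and S₁ ⊆ {v ∈ {0,1}^n : v_n = 1}, each of size at most x·2^{n-1} / (b_{n-1}(⌊(N-1)/2⌋) + b_{n-1}(⌈(N-1)/2⌉ - 1)), together with a set T ⊆ {0,1}^n containing all vectors missed by S = S₀ ∪ S₁ with respect to coordinate n and closed under flipping coordinate n, such that (S, T) is a norm N-patched symmetric code and |T| ≤ 2^{n+1} ∑_{i=0}^{N-1} exp(-k(b_{n-1}(i-1)+b_{n-1}(N-i-1))/2^{n-1}) + 2^{n+1} exp(-k·b_{n-1}(N-1)/2^{n-1}), where k = ⌊x·2^{n-1} / (b_{n-1}(⌊(N-1)/2⌋) + b_{n-1}(⌈(N-1)/2⌉ - 1))⌋. -/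
/-!
Choose `f, g : Fin k → {0,1}^n` uniformly at random, let `S₀`, `S₁` be their words with the last
coordinate forced to `0`, resp. `1`, and let `T` be the set of words missed by `S₀ ∪ S₁`. Every
`u ∈ S₀` and `w ∈ S₁` differ in the last coordinate, so flipping that coordinate of `v` leaves
`d(v, u) + d(v, w)` unchanged: `T` is closed under the flip and `(S, T)` is patched.

If `v` is missed and the nearest word of `S` on the side opposite to `v` is at distance
`t + 1 ≤ N`, then all of `S` on the side of `v` lies at distance `≥ N - t`; otherwise the opposite
side misses the ball of radius `N`. Each case forces `f` and `g` to avoid explicit sets of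
`2 b_{n-1}(·)` words, which happens with probability at most `exp(-k · 2 b_{n-1}(·) / 2^n)`.
Summing over `v` bounds `E|T|`, and some choice of `(f, g)` is no worse than the expectation.
-/

open Finset

/-- Ball size `b_m(r)` for integer radius, with `b_m(r) = 1` for `r < 0` by convention. -/
def bb (m : ℕ) (r : ℤ) : ℕ :=
  if r < 0 then 1 else ∑ i ∈ Finset.range (r.toNat + 1), m.choose i

lemma hammingDist_eq_ite_add_succAbove {β : Type*} [DecidableEq β] {m : ℕ}
    (x y : Fin (m + 1) → β) (i : Fin (m + 1)) :
    hammingDist x y = (if x i = y i then 0 else 1)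
      + hammingDist (fun j => x (i.succAbove j)) (fun j => y (i.succAbove j)) := by
  unfold hammingDist
  rw [card_filter, card_filter, Fin.sum_univ_succAbove _ i]
  simp only [ne_eq, ite_not]

lemma hammingDist_update_right {β : Type*} [DecidableEq β] {m : ℕ}
    (x y : Fin (m + 1) → β) (i : Fin (m + 1)) (c : β) :
    hammingDist x (Function.update y i c) = (if x i = c then 0 else 1)
      + hammingDist (fun j => x (i.succAbove j)) (fun j => y (i.succAbove j)) := by
  simp [hammingDist_eq_ite_add_succAbove _ _ i]

lemma hammingDist_flipCoord_add {m : ℕ} (v u w : Vec (m + 1)) (i : Fin (m + 1))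
    (hu : u i = false) (hw : w i = true) :
    hammingDist (flipCoord v i) u + hammingDist (flipCoord v i) w
      = hammingDist v u + hammingDist v w := by
  simp only [hammingDist_eq_ite_add_succAbove _ _ i, flipCoord, Function.update_self,
    Function.update_of_ne (i.succAbove_ne _), hu, hw]
  cases v i <;> simp <;> omega

lemma card_filter_succAbove {β : Type*} [Fintype β] [DecidableEq β] {m : ℕ} (i : Fin (m + 1))
    (p : (Fin m → β) → Prop) [DecidablePred p] :
    #{y : Fin (m + 1) → β | p fun j => y (i.succAbove j)} = Fintype.card β * #{z | p z} := by
  rw [← card_univ, ← card_product]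
  refine card_equiv (Fin.insertNthEquiv (fun _ => β) i).symm fun y => ?_
  simp only [mem_filter, mem_univ, true_and, mem_product, Fin.insertNthEquiv_symm_apply]
  rfl

def ballCard (m s : ℕ) : ℕ := ∑ t ∈ range s, m.choose t

lemma card_hammingDist_eq {m : ℕ} (w : Fin m → Bool) (t : ℕ) :
    #{z | hammingDist w z = t} = m.choose t := by
  rw [show m.choose t = #(powersetCard t (univ : Finset (Fin m))) by simp]
  refine card_nbij' (fun z => ({j | w j ≠ z j} : Finset (Fin m)))
    (fun A j => if j ∈ A then !w j else w j) ?_ ?_ ?_ ?_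
  · intro z hz
    simpa [mem_powersetCard_univ, hammingDist] using hz
  · intro A hA
    simp only [mem_coe, mem_powersetCard_univ] at hA
    simp only [coe_filter, mem_univ, true_and]
    rw [← hA]
    unfold hammingDist
    congr 1
    ext j
    by_cases hj : j ∈ A <;> simp [hj]
  · intro z _
    funext j
    cases hw : w j <;> cases hz : z j <;> simp [hw, hz]
  · intro A _
    ext j
    by_cases hj : j ∈ A <;> simp [hj]

lemma card_hammingDist_lt {m : ℕ} (w : Fin m → Bool) (s : ℕ) :
    #{z | hammingDist w z < s} = ballCard m s := by
  rw [ballCard, card_eq_sum_card_fiberwise (f := hammingDist w) (t := range s)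
    (fun z hz => by simpa using hz)]
  refine sum_congr rfl fun t ht => ?_
  rw [filter_filter, ← card_hammingDist_eq w t]
  congr 1
  ext z
  simp only [mem_filter, mem_univ, true_and, and_iff_right_iff_imp]
  rintro rfl
  simpa using ht

lemma card_hammingDist_update_self_lt {m : ℕ} (v : Vec (m + 1)) (i : Fin (m + 1)) (s : ℕ) :
    #{y | hammingDist v (Function.update y i (v i)) < s} = 2 * ballCard m s := by
  simp only [hammingDist_update_right, if_pos, zero_add]
  rw [card_filter_succAbove i fun z => hammingDist (fun j => v (i.succAbove j)) z < s,
    card_hammingDist_lt, Fintype.card_bool]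

lemma card_hammingDist_update_not_lt {m : ℕ} (v : Vec (m + 1)) (i : Fin (m + 1)) (s : ℕ) :
    #{y | hammingDist v (Function.update y i (!v i)) < s + 1} = 2 * ballCard m s := by
  simp only [hammingDist_update_right, Bool.eq_not_self, if_false, add_comm 1,
    add_lt_add_iff_right]
  rw [card_filter_succAbove i fun z => hammingDist (fun j => v (i.succAbove j)) z < s,
    card_hammingDist_lt, Fintype.card_bool]

lemma dS_coe_eq_inf {n : ℕ} (v : Vec n) (S : Finset (Vec n)) :
    dS v ↑S = S.inf fun y => (hammingDist v y : ℕ∞) :=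
  (Finset.inf_eq_iInf _ _).symm

lemma dS_add_dS_le_iff {n : ℕ} (v : Vec n) (S₀ S₁ : Finset (Vec n)) (N : ℕ) :
    dS v ↑S₀ + dS v ↑S₁ ≤ (N : ℕ∞) ↔
      ∃ u ∈ S₀, ∃ w ∈ S₁, hammingDist v u + hammingDist v w ≤ N := by
  rw [dS_coe_eq_inf, dS_coe_eq_inf]
  constructor
  · intro h
    obtain rfl | h₀ := S₀.eq_empty_or_nonempty
    · simp at h
    obtain rfl | h₁ := S₁.eq_empty_or_nonempty
    · simp at h
    obtain ⟨u, hu, hu_min⟩ := S₀.exists_mem_eq_inf h₀ fun y => (hammingDist v y : ℕ∞)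
    obtain ⟨w, hw, hw_min⟩ := S₁.exists_mem_eq_inf h₁ fun y => (hammingDist v y : ℕ∞)
    rw [hu_min, hw_min] at h
    exact ⟨u, hu, w, hw, by exact_mod_cast h⟩
  · rintro ⟨u, hu, w, hw, h⟩
    have h' : (hammingDist v u : ℕ∞) + hammingDist v w ≤ N := by exact_mod_cast h
    exact (add_le_add (Finset.inf_le hu) (Finset.inf_le hw)).trans h'

noncomputable def missedSet {n : ℕ} (S₀ S₁ : Finset (Vec n)) (N : ℕ) : Finset (Vec n) :=
  {v | ¬ dS v ↑S₀ + dS v ↑S₁ ≤ (N : ℕ∞)}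

lemma flipCoord_mem_missedSet {m N : ℕ} {S₀ S₁ : Finset (Vec (m + 1))} {i : Fin (m + 1)}
    (hS₀ : ∀ u ∈ S₀, u i = false) (hS₁ : ∀ w ∈ S₁, w i = true) {v : Vec (m + 1)}
    (hv : v ∈ missedSet S₀ S₁ N) : flipCoord v i ∈ missedSet S₀ S₁ N := by
  simp only [missedSet, mem_filter, mem_univ, true_and, dS_add_dS_le_iff] at hv ⊢
  rintro ⟨u, hu, w, hw, h⟩
  rw [hammingDist_flipCoord_add v u w i (hS₀ u hu) (hS₁ w hw)] at h
  exact hv ⟨u, hu, w, hw, h⟩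

def updateImage {n k : ℕ} (i : Fin n) (c : Bool) (f : Fin k → Vec n) : Finset (Vec n) :=
  univ.image fun j => Function.update (f j) i c

lemma card_updateImage_le {n k : ℕ} (i : Fin n) (c : Bool) (f : Fin k → Vec n) :
    #(updateImage i c f) ≤ k :=
  card_image_le.trans_eq (by simp)

lemma mem_missedSet_updateImage {n k N : ℕ} {i : Fin n} {f g : Fin k → Vec n} {v : Vec n} :
    v ∈ missedSet (updateImage i false f) (updateImage i true g) N ↔
      ∀ j j', N < hammingDist v (Function.update (f j) i false)
        + hammingDist v (Function.update (g j') i true) := by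
  simp only [missedSet, mem_filter, mem_univ, true_and, dS_add_dS_le_iff, updateImage,
    mem_image, not_exists, not_and, not_le, forall_exists_index, forall_apply_eq_imp_iff]

lemma card_piFinset_compl_le {α : Type*} [Fintype α] [DecidableEq α] (k : ℕ) (X : Finset α) :
    (#(Fintype.piFinset fun _ : Fin k => Xᶜ) : ℝ)
      ≤ (Fintype.card α : ℝ) ^ k * Real.exp (-(k * #X) / Fintype.card α) := by
  set M := Fintype.card α
  have hXM : #X ≤ M := card_le_univ X
  have hbase : ((M - #X : ℕ) : ℝ) ≤ M * Real.exp (-#X / M) := by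
    rw [Nat.cast_sub hXM]
    rcases M.eq_zero_or_pos with h | h
    · have hX : #X = 0 := by omega
      simp [h, hX]
    · have hM : (0 : ℝ) < M := by exact_mod_cast h
      calc (M : ℝ) - #X = M * (1 - #X / M) := by field_simp
        _ ≤ M * Real.exp (-#X / M) := by
          rw [neg_div]
          exact mul_le_mul_of_nonneg_left (Real.one_sub_le_exp_neg _) hM.le
  rw [Fintype.card_piFinset, prod_const, card_compl, card_univ, Fintype.card_fin]
  push_cast
  calc ((M - #X : ℕ) : ℝ) ^ k ≤ (M * Real.exp (-#X / M)) ^ k :=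
        pow_le_pow_left₀ (Nat.cast_nonneg _) hbase k
    _ = _ := by rw [mul_pow, ← Real.exp_nat_mul]; ring_nf

lemma card_piFinset_compl_prod_le {m k a b : ℕ} (P Q : Finset (Vec (m + 1)))
    (hP : #P = 2 * a) (hQ : #Q = 2 * b) :
    (#((Fintype.piFinset fun _ : Fin k => Pᶜ) ×ˢ Fintype.piFinset fun _ : Fin k => Qᶜ) : ℝ)
      ≤ ((2 : ℝ) ^ (m + 1)) ^ k * ((2 : ℝ) ^ (m + 1)) ^ k
        * Real.exp (-(k * ((a + b : ℕ) : ℝ)) / 2 ^ m) := by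
  have hcard : (Fintype.card (Vec (m + 1)) : ℝ) = 2 ^ (m + 1) := by simp
  rw [card_product, Nat.cast_mul]
  refine (mul_le_mul (card_piFinset_compl_le k P) (card_piFinset_compl_le k Q)
    (by positivity) (by positivity)).trans_eq ?_
  rw [hcard, hP, hQ, mul_mul_mul_comm, ← Real.exp_add]
  congr 2
  push_cast
  field_simp
  ring

lemma exists_threshold_of_forall_lt_add {ι κ : Type*} [Fintype κ] {a : ι → ℕ} {b : κ → ℕ}
    {N : ℕ} (hb : ∀ y, 0 < b y) (h : ∀ x y, N < a x + b y) :
    (∀ y, N < b y) ∨ ∃ t < N, (∀ x, N ≤ a x + t) ∧ ∀ y, t < b y := by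
  by_cases hfar : ∀ y, N < b y
  · exact Or.inl hfar
  simp only [not_forall, not_lt] at hfar
  obtain ⟨y₀, hy₀⟩ := hfar
  obtain ⟨y, -, hy_min⟩ := exists_min_image univ b ⟨y₀, mem_univ y₀⟩
  have := hb y
  have := hy_min y₀ (mem_univ _)
  refine Or.inr ⟨b y - 1, by omega, fun x => ?_, fun y' => ?_⟩
  · have := h x y
    omega
  · have := hy_min y' (mem_univ _)
    omega

noncomputable def missProbBound (m k N : ℕ) : ℝ :=
  ∑ t ∈ range N, Real.exp (-(k * ((ballCard m (N - t) + ballCard m t : ℕ) : ℝ)) / 2 ^ m)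
    + Real.exp (-(k * (ballCard m N : ℝ)) / 2 ^ m)

lemma card_far_pairs_le {m : ℕ} (v : Vec (m + 1)) (i : Fin (m + 1)) (N k : ℕ) :
    (#{ω : (Fin k → Vec (m + 1)) × (Fin k → Vec (m + 1)) | ∀ j j', N <
        hammingDist v (Function.update (ω.1 j) i (v i))
          + hammingDist v (Function.update (ω.2 j') i (!v i))} : ℝ)
      ≤ ((2 : ℝ) ^ (m + 1)) ^ k * ((2 : ℝ) ^ (m + 1)) ^ k * missProbBound m k N := by
  set near : Bool → ℕ → Finset (Vec (m + 1)) :=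
    fun c s => {y | hammingDist v (Function.update y i c) < s}
  set avoiding : Finset (Vec (m + 1)) → Finset (Vec (m + 1)) → Finset _ :=
    fun P Q => (Fintype.piFinset fun _ : Fin k => Pᶜ) ×ˢ Fintype.piFinset fun _ : Fin k => Qᶜ
  have hcover : ({ω | ∀ j j', N < hammingDist v (Function.update (ω.1 j) i (v i))
          + hammingDist v (Function.update (ω.2 j') i (!v i))} : Finset _)
      ⊆ avoiding ∅ (near (!v i) (N + 1))
        ∪ (range N).biUnion fun t => avoiding (near (v i) (N - t)) (near (!v i) (t + 1)) := by
    intro ω hω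
    rw [mem_filter] at hω
    have hopp_pos : ∀ j', 0 < hammingDist v (Function.update (ω.2 j') i (!v i)) := fun j' =>
      hammingDist_pos.2 fun h => by simpa using congrFun h i
    rcases exists_threshold_of_forall_lt_add hopp_pos hω.2 with hfar | ⟨t, ht, hsame, hopp⟩
    · refine mem_union_left _ ?_
      simp [avoiding, near, Fintype.mem_piFinset, hfar]
    · refine mem_union_right _ (mem_biUnion.2 ⟨t, mem_range.2 ht, ?_⟩)
      simp [avoiding, near, Fintype.mem_piFinset, hsame, hopp]
  have hcount := (card_le_card hcover).trans ((card_union_le _ _).trans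
    (Nat.add_le_add_left card_biUnion_le _))
  calc _ ≤ (#(avoiding ∅ (near (!v i) (N + 1))) : ℝ)
        + ∑ t ∈ range N, (#(avoiding (near (v i) (N - t)) (near (!v i) (t + 1))) : ℝ) := by
        exact_mod_cast hcount
    _ ≤ ((2 : ℝ) ^ (m + 1)) ^ k * ((2 : ℝ) ^ (m + 1)) ^ k
          * Real.exp (-(k * ((0 + ballCard m N : ℕ) : ℝ)) / 2 ^ m)
        + ∑ t ∈ range N, ((2 : ℝ) ^ (m + 1)) ^ k * ((2 : ℝ) ^ (m + 1)) ^ k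
          * Real.exp (-(k * ((ballCard m (N - t) + ballCard m t : ℕ) : ℝ)) / 2 ^ m) :=
      add_le_add (card_piFinset_compl_prod_le _ _ (by simp) (card_hammingDist_update_not_lt v i N))
        (sum_le_sum fun t _ => card_piFinset_compl_prod_le _ _
          (card_hammingDist_update_self_lt v i _) (card_hammingDist_update_not_lt v i t))
    _ = _ := by rw [missProbBound, ← mul_sum, zero_add]; ring

lemma card_filter_mem_missedSet_le {m : ℕ} (v : Vec (m + 1)) (i : Fin (m + 1)) (N k : ℕ) :
    (#{ω : (Fin k → Vec (m + 1)) × (Fin k → Vec (m + 1)) |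
        v ∈ missedSet (updateImage i false ω.1) (updateImage i true ω.2) N} : ℝ)
      ≤ ((2 : ℝ) ^ (m + 1)) ^ k * ((2 : ℝ) ^ (m + 1)) ^ k * missProbBound m k N := by
  refine le_of_eq_of_le ?_ (card_far_pairs_le v i N k)
  simp only [mem_missedSet_updateImage]
  cases hv : v i
  · rfl
  · exact_mod_cast card_equiv (Equiv.prodComm _ _) fun ω => by
      simp only [mem_filter, mem_univ, true_and, Equiv.prodComm_apply, Prod.fst_swap,
        Prod.snd_swap, Bool.not_true]
      rw [forall_comm]
      simp only [add_comm]

lemma exists_card_missedSet_le {m : ℕ} (i : Fin (m + 1)) (N k : ℕ) :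
    ∃ f g : Fin k → Vec (m + 1),
      (#(missedSet (updateImage i false f) (updateImage i true g) N) : ℝ)
        ≤ 2 ^ (m + 1) * missProbBound m k N := by
  have hdouble : ∑ ω : (Fin k → Vec (m + 1)) × (Fin k → Vec (m + 1)),
      (#(missedSet (updateImage i false ω.1) (updateImage i true ω.2) N) : ℝ)
        = ∑ v : Vec (m + 1), (#{ω : (Fin k → Vec (m + 1)) × (Fin k → Vec (m + 1)) |
          v ∈ missedSet (updateImage i false ω.1) (updateImage i true ω.2) N} : ℝ) := by
    have := sum_card_bipartiteAbove_eq_sum_card_bipartiteBelow (s := univ) (t := univ)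
      (r := fun (ω : (Fin k → Vec (m + 1)) × (Fin k → Vec (m + 1))) v =>
        v ∈ missedSet (updateImage i false ω.1) (updateImage i true ω.2) N)
    simp only [bipartiteAbove, bipartiteBelow, filter_mem_eq_inter, univ_inter] at this
    exact_mod_cast this
  obtain ⟨ω, -, hω⟩ := exists_le_of_sum_le (univ_nonempty (α := (Fin k → Vec (m + 1)) × _))
    (f := fun ω => (#(missedSet (updateImage i false ω.1) (updateImage i true ω.2) N) : ℝ))
    (g := fun _ => 2 ^ (m + 1) * missProbBound m k N) <| by
      rw [hdouble]
      refine (sum_le_sum fun v _ => card_filter_mem_missedSet_le v i N k).trans_eq ?_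
      simp [Fintype.card_pi]
      ring
  exact ⟨ω.1, ω.2, hω⟩

lemma bb_eq_ballCard {m s : ℕ} {r : ℤ} (hs : 0 < s) (h : r + 1 = s) :
    bb m r = ballCard m s := by
  rw [bb, if_neg (by omega), ballCard]
  congr
  omega

lemma missProbBound_le {m k N : ℕ} (hN : 1 ≤ N) :
    missProbBound m k N
      ≤ 2 * (∑ t ∈ range N, Real.exp (-((k : ℝ) * ((bb m ((t : ℤ) - 1)
            + bb m ((N : ℤ) - t - 1) : ℕ) : ℝ)) / 2 ^ m)
        + Real.exp (-((k : ℝ) * ((bb m ((N : ℤ) - 1) : ℕ) : ℝ)) / 2 ^ m)) := by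
  obtain ⟨N, rfl⟩ := Nat.exists_eq_add_of_le' hN
  have hsum : ∑ t ∈ range N,
      Real.exp (-(k * ((ballCard m (N + 1 - (t + 1)) + ballCard m (t + 1) : ℕ) : ℝ)) / 2 ^ m)
      = ∑ t ∈ range N, Real.exp (-((k : ℝ) * ((bb m (((t + 1 : ℕ) : ℤ) - 1)
            + bb m (((N + 1 : ℕ) : ℤ) - (t + 1 : ℕ) - 1) : ℕ) : ℝ)) / 2 ^ m) := by
    refine sum_congr rfl fun t ht => ?_
    rw [mem_range] at ht
    rw [bb_eq_ballCard (s := t + 1) (by omega) (by omega),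
      bb_eq_ballCard (s := N - t) (by omega) (by omega), add_comm (ballCard m _),
      show N + 1 - (t + 1) = N - t by omega]
  have hlast : bb m (((N + 1 : ℕ) : ℤ) - 1) = ballCard m (N + 1) :=
    bb_eq_ballCard (by omega) (by omega)
  rw [missProbBound, sum_range_succ', sum_range_succ', hsum, hlast]
  simp only [Nat.sub_zero, show ballCard m 0 = 0 from rfl, add_zero]
  -- The `t = 0` term of `missProbBound` duplicates its last term, whence the factor 2; the
  -- `t = 0` term on the right is dropped.
  have key : ∀ a s y : ℝ, 0 ≤ a → 0 ≤ s → a + y + y ≤ 2 * (a + s + y) := by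
    intros
    linarith
  exact key _ _ _ (sum_nonneg fun _ _ => (Real.exp_pos _).le) (Real.exp_pos _).le

theorem select_norm_patched_code (x : ℝ) (hx : 0 < x) (N n : ℕ)
    (hN : 1 ≤ N) (hNn : N ≤ n) :
    ∃ S₀ S₁ T : Finset (Vec n),
      (∀ v ∈ S₀, v ⟨n - 1, by omega⟩ = false) ∧
      (∀ v ∈ S₁, v ⟨n - 1, by omega⟩ = true) ∧
      (S₀.card : ℝ) ≤ x * 2 ^ (n - 1) /
        ((bb (n - 1) ⌊((N : ℚ) - 1) / 2⌋ + bb (n - 1) (⌈((N : ℚ) - 1) / 2⌉ - 1) : ℕ) : ℝ) ∧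
      (S₁.card : ℝ) ≤ x * 2 ^ (n - 1) /
        ((bb (n - 1) ⌊((N : ℚ) - 1) / 2⌋ + bb (n - 1) (⌈((N : ℚ) - 1) / 2⌉ - 1) : ℕ) : ℝ) ∧
      -- T contains every vector missed by S = S₀ ∪ S₁ with respect to coordinate n
      (∀ v : Vec n, ¬ (dS v ↑S₀ + dS v ↑S₁ ≤ (N : ℕ∞)) → v ∈ T) ∧
      -- T is closed under flipping coordinate n
      (∀ v ∈ T, flipCoord v ⟨n - 1, by omega⟩ ∈ T) ∧
      -- (S₀ ∪ S₁, T) is a norm N-patched symmetric code with coordinate n acceptable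
      (∀ v : Vec n, (dS v ↑S₀ + dS v ↑S₁ ≤ (N : ℕ∞))
        ∨ (v ∈ T ∧ flipCoord v ⟨n - 1, by omega⟩ ∈ T)) ∧
      (T.card : ℝ) ≤
        2 ^ (n + 1) * ∑ i ∈ Finset.range N,
            Real.exp (-((Nat.floor (x * 2 ^ (n - 1) /
                ((bb (n - 1) ⌊((N : ℚ) - 1) / 2⌋
                  + bb (n - 1) (⌈((N : ℚ) - 1) / 2⌉ - 1) : ℕ) : ℝ)) : ℝ)
              * ((bb (n - 1) ((i : ℤ) - 1) + bb (n - 1) ((N : ℤ) - i - 1) : ℕ) : ℝ))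
              / 2 ^ (n - 1))
          + 2 ^ (n + 1) *
            Real.exp (-((Nat.floor (x * 2 ^ (n - 1) /
                ((bb (n - 1) ⌊((N : ℚ) - 1) / 2⌋
                  + bb (n - 1) (⌈((N : ℚ) - 1) / 2⌉ - 1) : ℕ) : ℝ)) : ℝ)
              * ((bb (n - 1) ((N : ℤ) - 1) : ℕ) : ℝ))
              / 2 ^ (n - 1)) := by
  obtain ⟨m, rfl⟩ := Nat.exists_eq_add_of_le' (hN.trans hNn)
  simp only [Nat.add_sub_cancel]
  set i : Fin (m + 1) := Fin.last m
  set k := ⌊x * 2 ^ m / ((bb m ⌊((N : ℚ) - 1) / 2⌋ + bb m (⌈((N : ℚ) - 1) / 2⌉ - 1) : ℕ) : ℝ)⌋₊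
  obtain ⟨f, g, hT⟩ := exists_card_missedSet_le i N k
  have hS₀ : ∀ u ∈ updateImage i false f, u i = false := by simp [updateImage]
  have hS₁ : ∀ w ∈ updateImage i true g, w i = true := by simp [updateImage]
  have hk : ∀ c (h : Fin k → Vec (m + 1)), (#(updateImage i c h) : ℝ) ≤ _ := fun c h =>
    (Nat.cast_le.2 (card_updateImage_le i c h)).trans (Nat.floor_le (by positivity))
  refine ⟨_, _, missedSet (updateImage i false f) (updateImage i true g) N, hS₀, hS₁, hk _ _,
    hk _ _, fun v hv => by simpa [missedSet] using hv,
    fun v hv => flipCoord_mem_missedSet hS₀ hS₁ hv, fun v => ?_, ?_⟩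
  · by_cases hv : v ∈ missedSet (updateImage i false f) (updateImage i true g) N
    · exact Or.inr ⟨hv, flipCoord_mem_missedSet hS₀ hS₁ hv⟩
    · exact Or.inl (by simpa [missedSet] using hv)
  · refine hT.trans ((mul_le_mul_of_nonneg_left (missProbBound_le hN) (by positivity)).trans_eq ?_)
    ring
end

section
/- Fix an integer R ≥ 2. With n₁ = ⌊n/R⌋ and the sequences a_n := (1/2)·(x·2^{n-n₁+1}/(b_{n-n₁}(R-1)+b_{n-n₁}(R-2)))·(2^{n₁}·C(n,≤R))/(C(n₁,≤1)·2^n), we have limsup_{n→∞} a_n = x·(R/(R-1))^{R-1} ≤ e·x for any fixed x > 0. -/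
/-!
Write `q = n / R`, `m = n - q` and `b_n(r) = ∑ i ∈ range (r + 1), n.choose i`. Since `m + q = n`
the powers of two cancel and `a_n = x · b_n(R) / ((b_m(R-1) + b_m(R-2)) (1 + q))`. Now
`b_n(r) ~ n^r / r!` (the top binomial coefficient dominates), `q ~ n / R` and `m ~ n (R-1) / R`,
so `a_n` converges to `x (R/(R-1))^(R-1)`, which is then also its limsup. The bound by `e x` is
`(1 + 1/k)^k ≤ e`.
-/

open Filter Finset Asymptotics
open scoped Nat Topology

lemma isLittleO_sum_range_choose (k : ℕ) :
    (fun n : ℕ => ∑ i ∈ range k, (n.choose i : ℝ)) =o[atTop] fun n => (n.choose k : ℝ) :=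
  IsLittleO.fun_sum fun i hi => (isTheta_choose i).trans_isLittleO <|
    ((isLittleO_pow_pow_atTop_of_lt (mem_range.mp hi)).comp_tendsto
      tendsto_natCast_atTop_atTop).trans_isTheta (isTheta_choose k).symm

lemma isEquivalent_sum_range_succ_choose (k : ℕ) :
    (fun n : ℕ => ∑ i ∈ range (k + 1), (n.choose i : ℝ)) ~[atTop] fun n => (n : ℝ) ^ k / k ! := by
  have hsplit : (fun n : ℕ => ∑ i ∈ range (k + 1), (n.choose i : ℝ)) =
      (fun n => (n.choose k : ℝ)) + fun n => ∑ i ∈ range k, (n.choose i : ℝ) := by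
    ext n
    simp [sum_range_succ, add_comm]
  rw [hsplit]
  exact (IsEquivalent.refl.add_isLittleO (isLittleO_sum_range_choose k)).trans
    (isEquivalent_choose k)

lemma isEquivalent_sum_range_succ_choose_add_sum_range_choose (k : ℕ) :
    (fun n : ℕ => ∑ i ∈ range (k + 1), (n.choose i : ℝ) + ∑ i ∈ range k, (n.choose i : ℝ))
      ~[atTop] fun n => (n : ℝ) ^ k / k ! :=
  (isEquivalent_sum_range_succ_choose k).add_isLittleO
    ((isLittleO_sum_range_choose k).trans_isBigO (isEquivalent_choose k).isBigO)

lemma isEquivalent_of_abs_sub_le {α : Type*} {l : Filter α} {u v : α → ℝ} (C : ℝ)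
    (h : ∀ a, |u a - v a| ≤ C) (hv : Tendsto v l atTop) : u ~[l] v :=
  (IsBigO.of_bound C (.of_forall fun a => by simpa using h a)).trans_isLittleO
    ((isLittleO_one_left_iff ℝ).2 (tendsto_norm_atTop_atTop.comp hv))

lemma abs_natCast_div_sub_div_le_one (n R : ℕ) : |((n / R : ℕ) : ℝ) - n / R| ≤ 1 := by
  have h₁ : ((n / R : ℕ) : ℝ) ≤ n / R := Nat.cast_div_le
  have h₂ : (n : ℝ) / R < (n / R : ℕ) + 1 := by
    simpa [Nat.floor_div_eq_div] using Nat.lt_floor_add_one ((n : ℝ) / R)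
  rw [abs_le]
  constructor <;> linarith

lemma tendsto_sum_range_choose_div_sum_range_choose (k : ℕ) (hk : 0 < k) :
    Tendsto (fun n : ℕ => (∑ i ∈ range (k + 2), (n.choose i : ℝ)) /
        ((∑ i ∈ range (k + 1), ((n - n / (k + 1)).choose i : ℝ)
            + ∑ i ∈ range k, ((n - n / (k + 1)).choose i : ℝ)) * (1 + ((n / (k + 1) : ℕ) : ℝ))))
      atTop (𝓝 (((k + 1) / k) ^ k)) := by
  have hlin : Tendsto (fun n : ℕ => (n : ℝ) / (k + 1)) atTop atTop :=
    tendsto_natCast_atTop_atTop.atTop_div_const (by positivity)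
  have hq : (fun n : ℕ => 1 + ((n / (k + 1) : ℕ) : ℝ)) ~[atTop] fun n => (n : ℝ) / (k + 1) := by
    refine isEquivalent_of_abs_sub_le 2 (fun n => ?_) hlin
    have := abs_natCast_div_sub_div_le_one n (k + 1)
    push_cast at this
    rw [abs_le] at this ⊢
    constructor <;> linarith
  have hm : (fun n : ℕ => ((n - n / (k + 1) : ℕ) : ℝ)) ~[atTop] fun n => (n : ℝ) / (k + 1) * k := by
    refine isEquivalent_of_abs_sub_le 1 (fun n => ?_) (hlin.atTop_mul_const (by positivity))
    have := abs_natCast_div_sub_div_le_one n (k + 1)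
    rw [Nat.cast_sub (Nat.div_le_self n (k + 1)), ← abs_neg]
    push_cast at this
    convert this using 2
    field_simp
    ring
  have hmTop : Tendsto (fun n : ℕ => n - n / (k + 1)) atTop atTop :=
    tendsto_natCast_atTop_iff.1 (hm.symm.tendsto_atTop (hlin.atTop_mul_const (by positivity)))
  have hB := ((isEquivalent_sum_range_succ_choose_add_sum_range_choose k).comp_tendsto hmTop).trans
    ((hm.pow k).div IsEquivalent.refl)
  have h := (isEquivalent_sum_range_succ_choose (k + 1)).div (hB.mul hq)
  refine (h.congr_right ?_).tendsto_const
  have hk₀ : (k : ℝ) ≠ 0 := by positivity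
  filter_upwards [eventually_ne_atTop 0] with n hn₀
  have hn₀' : (n : ℝ) ≠ 0 := by exact_mod_cast hn₀
  simp only [Pi.div_apply, Pi.mul_apply, Pi.pow_apply, Function.const_apply, Nat.factorial_succ]
  push_cast
  rw [div_pow, mul_pow, div_pow, pow_succ]
  field_simp

lemma half_mul_two_pow_div_eq {x B b c : ℝ} {m q n : ℕ} (h : m + q = n) :
    1 / 2 * (x * 2 ^ (m + 1) / B) * (2 ^ q * b) / (c * 2 ^ n) = x * (b / (B * c)) := by
  subst h
  rw [pow_succ, pow_add]
  field_simp

lemma natCast_add_one_div_pow_le_exp_one (k : ℕ) (hk : 0 < k) :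
    (((k : ℝ) + 1) / k) ^ k ≤ Real.exp 1 := by
  have hk₀ : (k : ℝ) ≠ 0 := by positivity
  simpa [add_div, div_self hk₀, add_comm] using Real.one_add_inv_pow_le_exp (n := k)

theorem an_limsup (R : ℕ) (hR : 2 ≤ R) (x : ℝ) (hx : 0 < x) :
    Filter.limsup (fun n : ℕ =>
        (1 / 2 : ℝ) * (x * 2 ^ (n - n / R + 1) /
            ((∑ i ∈ Finset.range R, ((n - n / R).choose i : ℝ))
              + ∑ i ∈ Finset.range (R - 1), ((n - n / R).choose i : ℝ)))
          * (2 ^ (n / R) * ∑ i ∈ Finset.range (R + 1), (n.choose i : ℝ))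
          / ((∑ i ∈ Finset.range 2, ((n / R).choose i : ℝ)) * 2 ^ n))
      Filter.atTop
      = x * ((R : ℝ) / ((R : ℝ) - 1)) ^ (R - 1) ∧
    x * ((R : ℝ) / ((R : ℝ) - 1)) ^ (R - 1) ≤ Real.exp 1 * x := by
  obtain ⟨k, rfl⟩ : ∃ k, R = k + 1 := ⟨R - 1, by omega⟩
  have hk : 0 < k := by omega
  have hbase : ((k + 1 : ℕ) : ℝ) / ((k + 1 : ℕ) - 1) = (k + 1) / k := by push_cast; ring
  simp only [Nat.add_sub_cancel, hbase]
  refine ⟨Tendsto.limsup_eq ?_, ?_⟩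
  · refine ((tendsto_sum_range_choose_div_sum_range_choose k hk).const_mul x).congr fun n => ?_
    rw [half_mul_two_pow_div_eq (Nat.sub_add_cancel (Nat.div_le_self n (k + 1)))]
    simp [sum_range_succ]
  · rw [mul_comm _ x]
    exact mul_le_mul_of_nonneg_left (natCast_add_one_div_pow_le_exp_one k hk) hx.le
end

section
/- For every integer R ≥ 2, setting x₀ = R·log R + log R + log log R + 3, we have e^{x₀} > 4(1+x₀)·R^R. -/
theorem x0_inequality (R : ℕ) (hR : 2 ≤ R) :
    Real.exp ((R : ℝ) * Real.log R + Real.log R + Real.log (Real.log R) + 3)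
      > 4 * (1 + ((R : ℝ) * Real.log R + Real.log R + Real.log (Real.log R) + 3)) * (R : ℝ) ^ R := by
  have hR2 : (2:ℝ) ≤ (R:ℝ) := by exact_mod_cast hR
  have hRpos : (0:ℝ) < (R:ℝ) := by linarith
  set L := Real.log R with hL
  have hLpos : 0 < L := Real.log_pos (by linarith)
  have hL2 : Real.log 2 ≤ L := Real.log_le_log (by norm_num) hR2
  have hlog2 : (0.6931471803:ℝ) < Real.log 2 := Real.log_two_gt_d9
  have hlogL : Real.log L ≤ L - 1 := Real.log_le_sub_one_of_pos hLpos
  have hRL : 2 * L ≤ (R:ℝ) * L := by nlinarith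
  have he1 : (2.7182818283:ℝ) < Real.exp 1 := Real.exp_one_gt_d9
  have he3 : (20:ℝ) < Real.exp 3 := by
    have h3 : Real.exp 3 = Real.exp 1 * Real.exp 1 * Real.exp 1 := by
      rw [← Real.exp_add, ← Real.exp_add]; norm_num
    nlinarith [Real.exp_pos 1]
  have hexp : Real.exp ((R:ℝ) * L + L + Real.log L + 3)
      = (R:ℝ) ^ R * ((R:ℝ) * L * Real.exp 3) := by
    rw [Real.exp_add, Real.exp_add, Real.exp_add, Real.exp_log hLpos, Real.exp_log hRpos]
    have : Real.exp ((R:ℝ) * L) = (R:ℝ) ^ R := by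
      rw [Real.exp_nat_mul, Real.exp_log hRpos]
    rw [this]; ring
  rw [hexp]
  have hpow : (0:ℝ) < (R:ℝ) ^ R := pow_pos hRpos R
  have key : 4 * (1 + ((R:ℝ) * L + L + Real.log L + 3)) < (R:ℝ) * L * Real.exp 3 := by
    nlinarith [mul_le_mul_of_nonneg_left hL2 (by norm_num : (0:ℝ) ≤ 2)]
  nlinarith [mul_lt_mul_of_pos_left key hpow]
end
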